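/- Let S ⊆ {1,…,n} satisfy p(S) ∈ Q(n). Then there exists a vector c ∈ ℤ^n with c_1 ≥ c_2 ≥ ⋯ ≥ c_n ≥ 0 such that |p(S)·c| < |p(S')·c| for every subset S' of {1,…,n} with p(S') ∈ Q(n), S' ≠ S and S' ≠ {1,…,n}∖S. -/
import Mathlib


open Finset

/-- Cumulative sum: `x 0 + ... + x k`. -/
def cum {n : ℕ} (x : Fin n → ℤ) (k : Fin n) : ℤ := ∑ i ∈ Finset.Iic k, x i

/-- The partial order `⪯`: every partial sum of `x` is at most that of `y`. -/
def ple {n : ℕ} (x y : Fin n → ℤ) : Prop := ∀ k : Fin n, cum x k ≤ cum y k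

/-- Membership in `P(n)`: all entries are `1` or `-1`. -/
def isPM {n : ℕ} (v : Fin n → ℤ) : Prop := ∀ i, v i = 1 ∨ v i = -1

/-- Membership in `Q(n)`. -/
def inQ {n : ℕ} (v : Fin n → ℤ) : Prop := isPM v ∧ ¬ ple v 0 ∧ ¬ ple 0 v

/-- Standard inner product on `ℤ^n`. -/
def dotp {n : ℕ} (x y : Fin n → ℤ) : ℤ := ∑ i, x i * y i

/-- The ±1 vector of a subset `S`. -/
def pS {n : ℕ} (S : Finset (Fin n)) : Fin n → ℤ := fun i => if i ∈ S then 1 else -1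

/-- The vector `m_k`: first `k` entries 1, next `k+1` entries −1, rest 1 (0-indexed). -/
def mvec (n k : ℕ) : Fin n → ℤ := fun i => if i.val < k then 1 else if i.val < 2 * k + 1 then -1 else 1

/-- An instance of the partition problem: `c_1 ≥ c_2 ≥ ⋯ ≥ c_n ≥ 0`. -/
def monoc {n : ℕ} (c : Fin n → ℤ) : Prop := (∀ i j : Fin n, i ≤ j → c j ≤ c i) ∧ ∀ i, 0 ≤ c i

-- Abel summation
lemma abel {n : ℕ} (v d : Fin n → ℤ) :
    dotp v (fun i => ∑ j ∈ Finset.Ici i, d j) = ∑ k, d k * cum v k := by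
  unfold dotp cum
  calc ∑ i, v i * ∑ j ∈ Finset.Ici i, d j
      = ∑ i : Fin n, ∑ j ∈ Finset.Ici i, v i * d j := by
        simp [Finset.mul_sum]
    _ = ∑ j : Fin n, ∑ i ∈ Finset.Iic j, v i * d j := by
        apply Finset.sum_comm'
        intro i j
        simp [Finset.mem_Ici, Finset.mem_Iic, and_comm]
    _ = ∑ k : Fin n, d k * ∑ i ∈ Finset.Iic k, v i := by
        congr 1; funext j; rw [← Finset.sum_mul]; ring

-- cum injective
lemma cum_inj {n : ℕ} (x y : Fin n → ℤ) (h : ∀ k, cum x k = cum y k) : x = y := by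
  suffices H : ∀ m (hm : m < n), x ⟨m, hm⟩ = y ⟨m, hm⟩ by
    funext k
    simpa using H k.val k.isLt
  intro m
  induction m using Nat.strong_induction_on with
  | _ m ih =>
    intro hm
    set k : Fin n := ⟨m, hm⟩ with hk_def
    have h1 := h k
    unfold cum at h1
    have hIic : Finset.Iic k = insert k (Finset.Iio k) := by
      rw [Finset.Iio_insert]
    rw [hIic, Finset.sum_insert (by simp), Finset.sum_insert (by simp)] at h1
    have h2 : ∑ i ∈ Finset.Iio k, x i = ∑ i ∈ Finset.Iio k, y i := by
      apply Finset.sum_congr rfl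
      intro i hi
      have hilt : i.val < m := Fin.lt_def.mp (Finset.mem_Iio.mp hi)
      have := ih i.val hilt i.isLt
      simpa using this
    omega

lemma pS_inj {n : ℕ} (S S' : Finset (Fin n)) (h : pS S = pS S') : S = S' := by
  ext i
  have := congrFun h i
  unfold pS at this
  by_cases h1 : i ∈ S <;> by_cases h2 : i ∈ S' <;> simp_all

lemma pS_compl {n : ℕ} (S : Finset (Fin n)) : pS Sᶜ = fun i => -(pS S i) := by
  funext i
  unfold pS
  by_cases h : i ∈ S <;> simp [h]

lemma cum_bound {n : ℕ} (v : Fin n → ℤ) (hv : isPM v) (k : Fin n) : |cum v k| ≤ n := by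
  unfold cum
  calc |∑ i ∈ Finset.Iic k, v i| ≤ ∑ i ∈ Finset.Iic k, |v i| := Finset.abs_sum_le_sum_abs _ _
    _ ≤ ∑ i : Fin n, |v i| := by
        apply Finset.sum_le_sum_of_subset_of_nonneg (Finset.subset_univ _)
        intro i _ _; exact abs_nonneg _
    _ = ∑ i : Fin n, 1 := by
        apply Finset.sum_congr rfl
        intro i _; rcases hv i with h | h <;> simp [h]
    _ = n := by simp

lemma cum_bot {n : ℕ} (hn : 0 < n) (x : Fin n → ℤ) : cum x ⟨0, hn⟩ = x ⟨0, hn⟩ := by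
  unfold cum
  have : Finset.Iic (⟨0, hn⟩ : Fin n) = {⟨0, hn⟩} := by
    ext i
    simp only [Finset.mem_Iic, Finset.mem_singleton, Fin.le_def, Fin.ext_iff]
    omega
  rw [this, Finset.sum_singleton]

-- key nonvanishing lemma
lemma keylem {n : ℕ} (e : Fin n → ℕ) (he : Function.Injective e)
    (g : Fin n → ℤ) (T : ℤ) (hT : ∑ k, |g k| < T) (hg : ∃ k, g k ≠ 0) :
    ∑ k, g k * T ^ (e k) ≠ 0 := by
  have hT1 : 1 ≤ T := by
    have : (0:ℤ) ≤ ∑ k, |g k| := Finset.sum_nonneg fun k _ => abs_nonneg _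
    omega
  set s := Finset.univ.filter (fun k => g k ≠ 0) with hs_def
  obtain ⟨k0, hk0⟩ := hg
  have hs : s.Nonempty := ⟨k0, by simp only [hs_def, Finset.mem_filter, Finset.mem_univ, true_and]; exact hk0⟩
  obtain ⟨j, hjs, hjmax⟩ := Finset.exists_max_image s e hs
  have hgj : g j ≠ 0 := (Finset.mem_filter.mp hjs).2
  have hsum : ∑ k, g k * T ^ e k = g j * T ^ e j + ∑ k ∈ s.erase j, g k * T ^ e k := by
    rw [Finset.add_sum_erase s (fun k => g k * T ^ e k) hjs]
    symm
    apply Finset.sum_subset (Finset.filter_subset _ _)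
    intro k _ hk
    simp [hs_def] at hk
    simp [hk]
  rw [hsum]
  rcases Finset.eq_empty_or_nonempty (s.erase j) with hemp | hne
  · rw [hemp, Finset.sum_empty, add_zero]
    exact mul_ne_zero hgj (pow_ne_zero _ (by omega))
  · have hej : 1 ≤ e j := by
      obtain ⟨k, hk⟩ := hne
      have hlt : e k < e j := by
        have hle : e k ≤ e j := hjmax k (Finset.mem_of_mem_erase hk)
        rcases hle.lt_or_eq with h | h
        · exact h
        · exact absurd (he h) (Finset.ne_of_mem_erase hk)
      omega
    have hRbound : |∑ k ∈ s.erase j, g k * T ^ e k| < T ^ e j := by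
      calc |∑ k ∈ s.erase j, g k * T ^ e k|
          ≤ ∑ k ∈ s.erase j, |g k * T ^ e k| := Finset.abs_sum_le_sum_abs _ _
        _ ≤ ∑ k ∈ s.erase j, |g k| * T ^ (e j - 1) := by
            apply Finset.sum_le_sum
            intro k hk
            rw [abs_mul, abs_pow, abs_of_nonneg (by omega : (0:ℤ) ≤ T)]
            apply mul_le_mul_of_nonneg_left _ (abs_nonneg _)
            apply pow_le_pow_right₀ hT1
            have hlt : e k < e j := by
              have hle : e k ≤ e j := hjmax k (Finset.mem_of_mem_erase hk)
              rcases hle.lt_or_eq with h | h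
              · exact h
              · exact absurd (he h) (Finset.ne_of_mem_erase hk)
            omega
        _ = (∑ k ∈ s.erase j, |g k|) * T ^ (e j - 1) := by rw [Finset.sum_mul]
        _ ≤ (T - 1) * T ^ (e j - 1) := by
            apply mul_le_mul_of_nonneg_right _ (pow_nonneg (by omega) _)
            have h1 : ∑ k ∈ s.erase j, |g k| ≤ ∑ k, |g k| := by
              apply Finset.sum_le_sum_of_subset_of_nonneg (Finset.subset_univ _)
              intro i _ _; exact abs_nonneg _
            omega
        _ < T * T ^ (e j - 1) := by
            apply mul_lt_mul_of_pos_right (by omega) (pow_pos (by omega) _)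
        _ = T ^ e j := by
            rw [← pow_succ']
            congr 1
            omega
    have hmain : T ^ e j ≤ |g j * T ^ e j| := by
      rw [abs_mul, abs_pow, abs_of_nonneg (by omega : (0:ℤ) ≤ T)]
      have : 1 ≤ |g j| := by
        rcases abs_pos.mpr hgj with h
        omega
      nlinarith [pow_pos (show (0:ℤ) < T by omega) (e j)]
    intro heq
    have : g j * T ^ e j = -(∑ k ∈ s.erase j, g k * T ^ e k) := by linarith
    rw [this, abs_neg] at hmain
    omega

lemma cum_neg {n : ℕ} (x : Fin n → ℤ) (k : Fin n) : cum (fun i => -(x i)) k = -cum x k := by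
  simp [cum]

-- the fundamental identity: ∑ d k * x k in product form
lemma iden {n : ℕ} (u x W : Fin n → ℤ) (b : Fin n) (hWb : W b = 0) :
    ∑ k, (if k = b then (∑ k', W k' * u k') else (-(u b)) * W k) * x k
      = ∑ k, (if k = b then 0 else (x b * u k - u b * x k)) * W k := by
  rw [← Finset.add_sum_erase _
      (fun k => (if k = b then (∑ k', W k' * u k') else (-(u b)) * W k) * x k) (Finset.mem_univ b),
      ← Finset.add_sum_erase _
      (fun k => (if k = b then 0 else (x b * u k - u b * x k)) * W k) (Finset.mem_univ b)]
  have hM : ∑ k', W k' * u k' = ∑ k ∈ Finset.univ.erase b, W k * u k := by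
    rw [← Finset.add_sum_erase _ (fun k => W k * u k) (Finset.mem_univ b), hWb, zero_mul, zero_add]
  have hL : ∑ k ∈ Finset.univ.erase b, (if k = b then (∑ k', W k' * u k') else (-(u b)) * W k) * x k
      = ∑ k ∈ Finset.univ.erase b, (-(u b)) * W k * x k := by
    apply Finset.sum_congr rfl
    intro k hk
    rw [if_neg (Finset.mem_erase.mp hk).1]
  have hR : ∑ k ∈ Finset.univ.erase b, (if k = b then 0 else (x b * u k - u b * x k)) * W k
      = ∑ k ∈ Finset.univ.erase b, (x b * u k - u b * x k) * W k := by
    apply Finset.sum_congr rfl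
    intro k hk
    rw [if_neg (Finset.mem_erase.mp hk).1]
  rw [hL, hR, if_pos rfl, if_pos rfl, zero_mul, zero_add, hM, Finset.sum_mul,
    ← Finset.sum_add_distrib]
  apply Finset.sum_congr rfl
  intro k _
  ring

theorem stmt14 {n : ℕ} (S : Finset (Fin n)) (hS : inQ (pS S)) :
    ∃ c : Fin n → ℤ, monoc c ∧
      ∀ S' : Finset (Fin n), inQ (pS S') → S' ≠ S → S' ≠ Sᶜ →
        |dotp (pS S) c| < |dotp (pS S') c| := by
  obtain ⟨hpm, hnot1, hnot2⟩ := hS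
  have hcum0 : ∀ k : Fin n, cum (0 : Fin n → ℤ) k = 0 := by
    intro k; simp [cum]
  obtain ⟨a, ha⟩ : ∃ a : Fin n, 0 < cum (pS S) a := by
    by_contra h
    push_neg at h
    exact hnot1 fun k => by rw [hcum0]; exact h k
  obtain ⟨b, hb⟩ : ∃ b : Fin n, cum (pS S) b < 0 := by
    by_contra h
    push_neg at h
    exact hnot2 fun k => by rw [hcum0]; exact h k
  have hn : 0 < n := b.pos
  have hab : a ≠ b := by
    intro h; rw [h] at ha; omega
  set u : Fin n → ℤ := cum (pS S) with hu_def
  have hn1 : (1:ℤ) ≤ (n:ℤ) := by exact_mod_cast hn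
  set T : ℤ := 2 * (n:ℤ)^3 + 1 with hT_def
  have hT1 : 1 ≤ T := by
    rw [hT_def]
    have : (0:ℤ) ≤ (n:ℤ)^3 := by positivity
    linarith
  set e : Fin n → ℕ := fun k => if k = a then n else k.val with he_def
  have he : Function.Injective e := by
    intro k1 k2 h
    have h1 := k1.isLt
    have h2 := k2.isLt
    rw [he_def] at h
    simp only at h
    by_cases ha1 : k1 = a <;> by_cases ha2 : k2 = a
    · rw [ha1, ha2]
    · rw [if_pos ha1, if_neg ha2] at h; omega
    · rw [if_neg ha1, if_pos ha2] at h; omega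
    · rw [if_neg ha1, if_neg ha2] at h; exact Fin.ext h
  clear_value T
  set w : Fin n → ℤ := fun k => if k = b then 0 else T ^ (e k) with hw_def
  have hwb : w b = 0 := by rw [hw_def]; simp
  have hwnn : ∀ k, 0 ≤ w k := by
    intro k
    rw [hw_def]
    by_cases hk : k = b
    · simp [hk]
    · simp only [if_neg hk]
      exact pow_nonneg (by linarith) _
  set M : ℤ := ∑ k', w k' * u k' with hM_def
  set D : Fin n → ℤ := fun k => if k = b then M else (-(u b)) * w k with hD_def
  clear_value e w M D
  -- bounds on u
  have hubnd : ∀ k, |u k| ≤ (n:ℤ) := fun k => cum_bound (pS S) hpm k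
  -- M is nonnegative
  have hMnn : 0 ≤ M := by
    have hsplit : M = w a * u a + ∑ k ∈ Finset.univ.erase a, w k * u k := by
      rw [hM_def, ← Finset.add_sum_erase _ (fun k => w k * u k) (Finset.mem_univ a)]
    have hwa : w a = T ^ n := by
      rw [hw_def]
      simp only [if_neg hab, he_def, if_pos rfl]
    have hTp : (0:ℤ) < T ^ (n-1) := pow_pos (by linarith) _
    have hterm : ∀ k ∈ Finset.univ.erase a, -((n:ℤ) * T ^ (n-1)) ≤ w k * u k := by
      intro k hk
      have hka : k ≠ a := (Finset.mem_erase.mp hk).1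
      by_cases hkb : k = b
      · rw [hkb, hwb, zero_mul]
        have h0 : (0:ℤ) ≤ (n:ℤ) * T ^ (n-1) := mul_nonneg (by linarith) hTp.le
        linarith
      · rw [hw_def]
        simp only [if_neg hkb]
        have hek : e k ≤ n - 1 := by
          rw [he_def]
          simp only [if_neg hka]
          have := k.isLt
          omega
        have hpb : T ^ (e k) ≤ T ^ (n-1) := pow_le_pow_right₀ hT1 hek
        have hpp : (0:ℤ) < T ^ (e k) := pow_pos (by linarith) _
        have hk1 := (abs_le.mp (hubnd k)).1
        nlinarith
    have hsum : ∑ _k ∈ Finset.univ.erase a, (-((n:ℤ) * T ^ (n-1)))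
        ≤ ∑ k ∈ Finset.univ.erase a, w k * u k := Finset.sum_le_sum hterm
    have hconst : ∑ _k ∈ Finset.univ.erase a, (-((n:ℤ) * T ^ (n-1)))
        = ((n:ℤ)-1) * (-((n:ℤ) * T ^ (n-1))) := by
      rw [Finset.sum_const, Finset.card_erase_of_mem (Finset.mem_univ a), Finset.card_univ,
        Fintype.card_fin, nsmul_eq_mul]
      have hc : ((n-1:ℕ):ℤ) = (n:ℤ) - 1 := by omega
      rw [hc]
    rw [hconst] at hsum
    have hua : 1 ≤ u a := ha
    have hTn : T ^ n = T ^ (n-1) * T := by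
      rw [← pow_succ]
      congr 1
      omega
    have h1 : T ^ n * 1 ≤ w a * u a := by
      rw [hwa]
      have : (0:ℤ) < T ^ n := pow_pos (by linarith) _
      nlinarith
    rw [hsplit]
    have key : 0 ≤ T - ((n:ℤ)-1)*(n:ℤ) := by
      rw [hT_def]
      nlinarith [hn1, mul_le_mul_of_nonneg_right hn1 (sq_nonneg (n:ℤ))]
    have key2 : ((n:ℤ)-1) * ((n:ℤ) * T^(n-1)) ≤ T ^ n := by
      rw [hTn]
      nlinarith [hTp, key, mul_le_mul_of_nonneg_left key hTp.le]
    linarith [h1, hsum, key2]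
  -- nonnegativity of D
  have hDnn : ∀ k, 0 ≤ D k := by
    intro k
    rw [hD_def]
    by_cases hk : k = b
    · simp only [if_pos hk]; exact hMnn
    · simp only [if_neg hk]
      have : 0 < -(u b) := by omega
      exact mul_nonneg (by omega) (hwnn k)
  refine ⟨fun i => ∑ j ∈ Finset.Ici i, D j, ⟨?_, ?_⟩, ?_⟩
  · intro i j hij
    apply Finset.sum_le_sum_of_subset_of_nonneg (Finset.Ici_subset_Ici.mpr hij)
    intro k _ _
    exact hDnn k
  · intro i
    exact Finset.sum_nonneg fun k _ => hDnn k
  · intro S' hS' hne hnec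
    set u' : Fin n → ℤ := cum (pS S') with hu'_def
    have habel : ∀ v : Fin n → ℤ,
        dotp v (fun i => ∑ j ∈ Finset.Ici i, D j) = ∑ k, D k * cum v k := fun v => abel v D
    -- self dot is zero
    have hself : dotp (pS S) (fun i => ∑ j ∈ Finset.Ici i, D j) = 0 := by
      rw [habel]
      have : ∑ k, D k * u k
          = ∑ k, (if k = b then 0 else (u b * u k - u b * u k)) * w k := by
        rw [hD_def, hM_def]
        exact iden u u w b hwb
      rw [this]
      apply Finset.sum_eq_zero
      intro k _
      by_cases hk : k = b <;> simp [hk]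
    -- other dot is nonzero
    have hother : dotp (pS S') (fun i => ∑ j ∈ Finset.Ici i, D j) ≠ 0 := by
      rw [habel]
      have hid : ∑ k, D k * u' k
          = ∑ k, (if k = b then 0 else (u' b * u k - u b * u' k)) * T ^ (e k) := by
        rw [hD_def, hM_def]
        rw [iden u u' w b hwb]
        apply Finset.sum_congr rfl
        intro k _
        by_cases hk : k = b
        · simp [hk]
        · rw [hw_def]; simp only [if_neg hk]
      rw [hid]
      -- bound on coefficients
      have hu'bnd : ∀ k, |u' k| ≤ (n:ℤ) := fun k => cum_bound (pS S') hS'.1 k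
      have hgbnd : ∑ k : Fin n, |(if k = b then 0 else (u' b * u k - u b * u' k))| < T := by
        have hterm : ∀ k : Fin n, |(if k = b then 0 else (u' b * u k - u b * u' k))|
            ≤ 2 * (n:ℤ)^2 := by
          intro k
          by_cases hk : k = b
          · simp only [if_pos hk, abs_zero]
            positivity
          · simp only [if_neg hk]
            have h1 := abs_le.mp (hubnd k)
            have h2 := abs_le.mp (hubnd b)
            have h3 := abs_le.mp (hu'bnd k)
            have h4 := abs_le.mp (hu'bnd b)
            rw [abs_le]
            constructor <;> nlinarith
        calc ∑ k : Fin n, |(if k = b then 0 else (u' b * u k - u b * u' k))|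
            ≤ ∑ _k : Fin n, 2 * (n:ℤ)^2 := Finset.sum_le_sum fun k _ => hterm k
          _ = (n:ℤ) * (2 * (n:ℤ)^2) := by
              rw [Finset.sum_const, Finset.card_univ, Fintype.card_fin, nsmul_eq_mul]
          _ < T := by rw [hT_def]; nlinarith
      -- nonvanishing of coefficients
      have hGnz : ∃ k, (if k = b then 0 else (u' b * u k - u b * u' k)) ≠ 0 := by
        by_contra hcon
        push_neg at hcon
        have hall : ∀ k, u' b * u k = u b * u' k := by
          intro k
          by_cases hk : k = b
          · rw [hk]; ring
          · have h5 := hcon k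
            rw [if_neg hk] at h5
            exact sub_eq_zero.mp h5
        set z : Fin n := ⟨0, hn⟩ with hz_def
        have huz : u z = pS S z := cum_bot hn (pS S)
        have hu'z : u' z = pS S' z := cum_bot hn (pS S')
        have hvz : pS S z = 1 ∨ pS S z = -1 := hpm z
        have hv'z : pS S' z = 1 ∨ pS S' z = -1 := hS'.1 z
        have hzz := hall z
        rw [huz, hu'z] at hzz
        set ε : ℤ := pS S z * pS S' z with hε_def
        have hsq : pS S z * pS S z = 1 := by rcases hvz with h | h <;> rw [h] <;> ring
        have hub' : u' b = ε * u b := by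
          have h1 : u' b * (pS S z * pS S z) = u b * (pS S z * pS S' z) := by
            calc u' b * (pS S z * pS S z) = (u' b * pS S z) * pS S z := by ring
              _ = (u b * pS S' z) * pS S z := by rw [hzz]
              _ = u b * (pS S z * pS S' z) := by ring
          rw [hsq, mul_one] at h1
          rw [hε_def]
          linarith [h1]
        have hubne : u b ≠ 0 := by omega
        have hprop : ∀ k, u' k = ε * u k := by
          intro k
          have h1 := hall k
          rw [hub'] at h1
          have h2 : u b * (ε * u k) = u b * u' k := by linarith [h1]
          exact (mul_left_cancel₀ hubne h2).symm
        have hε : ε = 1 ∨ ε = -1 := by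
          rcases hvz with h | h <;> rcases hv'z with h' | h' <;> rw [hε_def, h, h'] <;> norm_num
        rcases hε with hε1 | hε1
        · apply hne
          apply pS_inj
          apply cum_inj
          intro k
          have hpk := hprop k
          rw [hε1, one_mul] at hpk
          show u' k = u k
          linarith
        · apply hnec
          apply pS_inj
          symm
          rw [pS_compl]
          apply cum_inj
          intro k
          rw [cum_neg]
          have hpk := hprop k
          rw [hε1] at hpk
          show -(u k) = u' k
          linarith
      exact keylem e he (fun k => if k = b then 0 else (u' b * u k - u b * u' k)) T hgbnd hGnz
    rw [hself, abs_zero]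
    exact abs_pos.mpr hother
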